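/- arXiv:1001.4314 — 2 statements merged into one kernel-verified Lean document; each statement's English description precedes it below -/
import Mathlib

section
/- Let E : A → P be a conditional expectation of finite index with the Rohlin property, with Rohlin projection e ∈ A_∞. Then for every x ∈ A^∞ there exists a unique y ∈ P^∞ such that x e = y e; explicitly y = (Index E) E^∞(x e). -/
/-- A finite-index inclusion `P ⊆ A` of unital C*-algebras together with its
C*-basic construction, all realized inside one ambient C*-algebra `B = C*⟨A, e_P⟩`:
`E : A → P` is a conditional expectation of finite Watatani index `ind`
(a central, positive, invertible element, with inverse `indInv`), `eP` is the Jones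
projection (`e_P a e_P = E(a) e_P`, `B` is the linear span of `A e_P A`), and
`Ehat` is the (faithful) dual conditional expectation `Ê : B → A`,
`Ê(x e_P y) = (Index E)⁻¹ x y`. -/
structure WatataniSetup (B : Type*) [NormedRing B] [StarRing B] [CStarRing B]
    [NormedAlgebra ℂ B] [CompleteSpace B] [StarModule ℂ B] [PartialOrder B]
    [StarOrderedRing B] where
  A : StarSubalgebra ℂ B
  P : StarSubalgebra ℂ B
  le : P ≤ A
  E : B → B
  eP : B
  Ehat : B → B
  ind : B
  indInv : B
  ind_mem : ind ∈ P
  ind_central : ∀ b : B, Commute ind b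
  ind_pos : 0 ≤ ind
  ind_mul_inv : ind * indInv = 1
  inv_mul_ind : indInv * ind = 1
  -- `E` is a conditional expectation from `A` onto `P`
  E_add : ∀ x y : B, E (x + y) = E x + E y
  E_smul : ∀ (c : ℂ) (x : B), E (c • x) = c • E x
  E_mem : ∀ x ∈ A, E x ∈ P
  E_fix : ∀ x ∈ P, E x = x
  E_bimod : ∀ p ∈ P, ∀ q ∈ P, ∀ x : B, E (p * x * q) = p * E x * q
  E_star : ∀ x : B, E (star x) = star (E x)
  E_pos : ∀ x : B, 0 ≤ E (star x * x)
  E_faithful : ∀ x ∈ A, E (star x * x) = 0 → x = 0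
  -- the Jones projection
  eP_idem : eP * eP = eP
  eP_star : star eP = eP
  eP_conj : ∀ a ∈ A, eP * a * eP = E a * eP
  eP_comm : ∀ p ∈ P, Commute eP p
  eP_inj : ∀ p ∈ P, p * eP = 0 → p = 0
  -- `B` is the basic construction: the linear span of `A e_P A`
  span : ∀ z : B, ∃ (n : ℕ) (x y : Fin n → B),
    (∀ i, x i ∈ A) ∧ (∀ i, y i ∈ A) ∧ z = ∑ i, x i * eP * y i
  -- the dual conditional expectation `Ê : B → A`
  Ehat_add : ∀ x y : B, Ehat (x + y) = Ehat x + Ehat y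
  Ehat_smul : ∀ (c : ℂ) (x : B), Ehat (c • x) = c • Ehat x
  Ehat_mem : ∀ x : B, Ehat x ∈ A
  Ehat_fix : ∀ x ∈ A, Ehat x = x
  Ehat_bimod : ∀ p ∈ A, ∀ q ∈ A, ∀ x : B, Ehat (p * x * q) = p * Ehat x * q
  Ehat_star : ∀ x : B, Ehat (star x) = star (Ehat x)
  Ehat_pos : ∀ x : B, 0 ≤ Ehat (star x * x)
  Ehat_faithful : ∀ x : B, Ehat (star x * x) = 0 → x = 0
  Ehat_eP : ∀ x ∈ A, ∀ y ∈ A, Ehat (x * eP * y) = indInv * (x * y)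


/-- A sequence `(a n)` in a normed space is bounded. -/
def IsBddSeq {A : Type*} [Norm A] (a : ℕ → A) : Prop := ∃ C : ℝ, ∀ n, ‖a n‖ ≤ C

/-- Data exhibiting the algebra `Ainf` as the quotient `A^∞ = ℓ^∞(ℕ, A)/c₀(A)` of
bounded sequences in `A` modulo null sequences; `q` is the quotient map (its values
on unbounded sequences are irrelevant). -/
structure SeqAlg (A : Type*) [NormedRing A] [StarRing A] [NormedAlgebra ℂ A]
    (Ainf : Type*) [Ring Ainf] [StarRing Ainf] [Algebra ℂ Ainf] where
  q : (ℕ → A) → Ainf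
  surj : ∀ z : Ainf, ∃ a : ℕ → A, IsBddSeq a ∧ q a = z
  q_add : ∀ a b : ℕ → A, IsBddSeq a → IsBddSeq b → q (a + b) = q a + q b
  q_mul : ∀ a b : ℕ → A, IsBddSeq a → IsBddSeq b → q (a * b) = q a * q b
  q_smul : ∀ (c : ℂ) (a : ℕ → A), IsBddSeq a → q (c • a) = c • q a
  q_star : ∀ a : ℕ → A, IsBddSeq a → q (star a) = star (q a)
  q_one : q 1 = 1
  q_eq_zero_iff : ∀ a : ℕ → A, IsBddSeq a →
    (q a = 0 ↔ Filter.Tendsto (fun n => ‖a n‖) Filter.atTop (nhds 0))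

/-- The canonical embedding of `A` into `Ainf` as (classes of) constant sequences. -/
def SeqAlg.incl {A : Type*} [NormedRing A] [StarRing A] [NormedAlgebra ℂ A]
    {Ainf : Type*} [Ring Ainf] [StarRing Ainf] [Algebra ℂ Ainf]
    (S : SeqAlg A Ainf) (x : A) : Ainf := S.q fun _ => x

/-- The subalgebra `C^∞ ⊆ B^∞` of elements represented by bounded sequences from a
subset `C ⊆ B`. -/
def SeqAlg.subAlg {B : Type*} [NormedRing B] [StarRing B] [NormedAlgebra ℂ B]
    {Binf : Type*} [Ring Binf] [StarRing Binf] [Algebra ℂ Binf]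
    (T : SeqAlg B Binf) (C : Set B) : Set Binf :=
  {z | ∃ a : ℕ → B, IsBddSeq a ∧ (∀ n, a n ∈ C) ∧ T.q a = z}


/-!
Write `c = Index E`. From `E^∞(e) = c⁻¹` one gets `e_P e e_P = c⁻¹ e_P`, so `c e e_P e` is a
subprojection of `e` with the same image `e` under the dual expectation `Ê^∞`. The Pimsner–Popa
inequality `‖z‖² ≤ C ‖Ê(z⋆ z)‖` (from a quasi-basis and the Cauchy–Schwarz inequality for
bimodule maps) makes `Ê^∞` faithful, hence `e = c e e_P e`.

For `x ∈ A^∞` let `y = c E^∞(x e) ∈ P^∞` and `d = x e - y e`. Then `E^∞(d) = 0`, so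
`e_P d e_P = 0`, and `e = c e e_P e` upgrades this to `d = 0`. Conversely `x e = y e` with
`y ∈ P^∞` forces `E^∞(x e) = y E^∞(e) = c⁻¹ y`.
-/

open Filter Topology Finset

section IsBddSeq

variable {A : Type*} [NormedRing A] {a b : ℕ → A}

lemma isBddSeq_const (x : A) : IsBddSeq fun _ : ℕ => x := ⟨‖x‖, fun _ => le_rfl⟩

lemma IsBddSeq.sub (ha : IsBddSeq a) (hb : IsBddSeq b) : IsBddSeq (a - b) := by
  obtain ⟨C, hC⟩ := ha
  obtain ⟨D, hD⟩ := hb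
  exact ⟨C + D, fun n => (norm_sub_le _ _).trans (add_le_add (hC n) (hD n))⟩

lemma IsBddSeq.mul (ha : IsBddSeq a) (hb : IsBddSeq b) : IsBddSeq (a * b) := by
  obtain ⟨C, hC⟩ := ha
  obtain ⟨D, hD⟩ := hb
  exact ⟨C * D, fun n => (norm_mul_le _ _).trans
    (mul_le_mul (hC n) (hD n) (norm_nonneg _) ((norm_nonneg _).trans (hC 0)))⟩

lemma IsBddSeq.star [StarRing A] [NormedStarGroup A] (ha : IsBddSeq a) : IsBddSeq (star a) := by
  obtain ⟨C, hC⟩ := ha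
  exact ⟨C, fun n => (norm_star (a n)).trans_le (hC n)⟩

lemma IsBddSeq.map [NormedAlgebra ℂ A] {F : Type*} [FunLike F A A]
    [ContinuousLinearMapClass F ℂ A A] (Φ : F) (ha : IsBddSeq a) : IsBddSeq fun n => Φ (a n) := by
  obtain ⟨C, hC⟩ := ha
  obtain ⟨K, hK, hΦ⟩ := SemilinearMapClass.bound_of_continuous Φ (map_continuous Φ)
  exact ⟨K * C, fun n => (hΦ _).trans (by gcongr; exact hC n)⟩

end IsBddSeq

namespace SeqAlg

variable {A : Type*} [NormedRing A] [StarRing A] [NormedAlgebra ℂ A]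
  {Ainf : Type*} [Ring Ainf] [StarRing Ainf] [Algebra ℂ Ainf] (T : SeqAlg A Ainf)

lemma q_sub {a b : ℕ → A} (ha : IsBddSeq a) (hb : IsBddSeq b) :
    T.q (a - b) = T.q a - T.q b := by
  rw [eq_sub_iff_add_eq, ← T.q_add _ _ (ha.sub hb) hb, sub_add_cancel]

lemma q_eq_q_iff {a b : ℕ → A} (ha : IsBddSeq a) (hb : IsBddSeq b) :
    T.q a = T.q b ↔ Tendsto (fun n => ‖a n - b n‖) atTop (𝓝 0) := by
  rw [← sub_eq_zero, ← T.q_sub ha hb, T.q_eq_zero_iff _ (ha.sub hb)]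
  rfl

lemma incl_mul (x y : A) : T.incl x * T.incl y = T.incl (x * y) :=
  (T.q_mul _ _ (isBddSeq_const x) (isBddSeq_const y)).symm

lemma incl_one : T.incl 1 = 1 := T.q_one

lemma star_incl (x : A) : star (T.incl x) = T.incl (star x) :=
  (T.q_star _ (isBddSeq_const x)).symm

lemma commute_incl {x : A} (hx : ∀ y, Commute x y) (z : Ainf) : Commute (T.incl x) z := by
  obtain ⟨a, ha, rfl⟩ := T.surj z
  rw [Commute, SemiconjBy, incl, ← T.q_mul _ _ (isBddSeq_const x) ha,
    ← T.q_mul _ _ ha (isBddSeq_const x)]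
  exact congrArg T.q (funext fun n => (hx (a n)).eq)

section subAlg

variable [StarModule ℂ A] {C D : StarSubalgebra ℂ A} {z w : Ainf}

lemma incl_mem_subAlg {x : A} (hx : x ∈ C) : T.incl x ∈ T.subAlg C :=
  ⟨_, isBddSeq_const x, fun _ => hx, rfl⟩

lemma one_mem_subAlg : (1 : Ainf) ∈ T.subAlg C := T.incl_one ▸ T.incl_mem_subAlg C.one_mem

lemma mul_mem_subAlg (hz : z ∈ T.subAlg C) (hw : w ∈ T.subAlg C) : z * w ∈ T.subAlg C := by
  obtain ⟨a, ha, haC, rfl⟩ := hz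
  obtain ⟨b, hb, hbC, rfl⟩ := hw
  exact ⟨a * b, ha.mul hb, fun n => mul_mem (haC n) (hbC n), T.q_mul _ _ ha hb⟩

lemma sub_mem_subAlg (hz : z ∈ T.subAlg C) (hw : w ∈ T.subAlg C) : z - w ∈ T.subAlg C := by
  obtain ⟨a, ha, haC, rfl⟩ := hz
  obtain ⟨b, hb, hbC, rfl⟩ := hw
  exact ⟨a - b, ha.sub hb, fun n => sub_mem (haC n) (hbC n), T.q_sub ha hb⟩

lemma star_mem_subAlg [NormedStarGroup A] (hz : z ∈ T.subAlg C) : star z ∈ T.subAlg C := by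
  obtain ⟨a, ha, haC, rfl⟩ := hz
  exact ⟨star a, ha.star, fun n => star_mem (haC n), T.q_star _ ha⟩

lemma subAlg_mono (hCD : C ≤ D) (hz : z ∈ T.subAlg C) : z ∈ T.subAlg D := by
  obtain ⟨a, ha, haC, rfl⟩ := hz
  exact ⟨a, ha, fun n => hCD (haC n), rfl⟩

end subAlg

/-- `Φ^∞`, computed on a chosen representative; for continuous linear `Φ` the choice does not
matter (`map_q`). -/
noncomputable def map {F : Type*} [FunLike F A A] (Φ : F) (z : Ainf) : Ainf :=
  T.q fun n => Φ ((T.surj z).choose n)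

variable {F : Type*} [FunLike F A A] [ContinuousLinearMapClass F ℂ A A] (Φ : F)

lemma map_q {a : ℕ → A} (ha : IsBddSeq a) : T.map Φ (T.q a) = T.q fun n => Φ (a n) := by
  obtain ⟨ha', hqa'⟩ := (T.surj (T.q a)).choose_spec
  set a' := (T.surj (T.q a)).choose
  obtain ⟨K, hK, hΦ⟩ := SemilinearMapClass.bound_of_continuous Φ (map_continuous Φ)
  rw [map, T.q_eq_q_iff (ha'.map Φ) (ha.map Φ)]
  refine squeeze_zero (fun _ => norm_nonneg _) (fun n => ?_)
    (by simpa using ((T.q_eq_q_iff ha' ha).mp hqa').const_mul K)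
  rw [← _root_.map_sub]
  exact hΦ _

lemma map_sub (z w : Ainf) : T.map Φ (z - w) = T.map Φ z - T.map Φ w := by
  obtain ⟨a, ha, rfl⟩ := T.surj z
  obtain ⟨b, hb, rfl⟩ := T.surj w
  rw [← T.q_sub ha hb, T.map_q Φ (ha.sub hb), T.map_q Φ ha, T.map_q Φ hb,
    ← T.q_sub (ha.map Φ) (hb.map Φ)]
  simp only [Pi.sub_apply, _root_.map_sub]
  rfl

lemma map_zero : T.map Φ 0 = 0 := by
  simpa using T.map_sub Φ 0 0

lemma map_mul_left {M : Set A} (hΦ : ∀ p ∈ M, ∀ y, Φ (p * y) = p * Φ y)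
    {z : Ainf} (hz : z ∈ T.subAlg M) (w : Ainf) : T.map Φ (z * w) = z * T.map Φ w := by
  obtain ⟨a, ha, haM, rfl⟩ := hz
  obtain ⟨b, hb, rfl⟩ := T.surj w
  rw [← T.q_mul _ _ ha hb, T.map_q Φ (ha.mul hb), T.map_q Φ hb, ← T.q_mul _ _ ha (hb.map Φ)]
  exact congrArg T.q (funext fun n => hΦ _ (haM n) _)

lemma map_mem_subAlg {C D : Set A} (hΦ : ∀ y ∈ C, Φ y ∈ D) {z : Ainf}
    (hz : z ∈ T.subAlg C) : T.map Φ z ∈ T.subAlg D := by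
  obtain ⟨a, ha, haC, rfl⟩ := hz
  exact ⟨_, ha.map Φ, fun n => hΦ _ (haC n), (T.map_q Φ ha).symm⟩

lemma map_eq_self {C : Set A} (hΦ : ∀ y ∈ C, Φ y = y) {z : Ainf}
    (hz : z ∈ T.subAlg C) : T.map Φ z = z := by
  obtain ⟨a, ha, haC, rfl⟩ := hz
  exact (T.map_q Φ ha).trans (congrArg T.q (funext fun n => hΦ _ (haC n)))

lemma eq_zero_of_map_star_mul_self_eq_zero [NormedStarGroup A] {C : ℝ}
    (hΦ : ∀ y, ‖y‖ ^ 2 ≤ C * ‖Φ (star y * y)‖) {z : Ainf} (hz : T.map Φ (star z * z) = 0) :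
    z = 0 := by
  obtain ⟨a, ha, rfl⟩ := T.surj z
  rw [← T.q_star _ ha, ← T.q_mul _ _ ha.star ha, T.map_q Φ (ha.star.mul ha),
    T.q_eq_zero_iff _ ((ha.star.mul ha).map Φ)] at hz
  have hsq : Tendsto (fun n => ‖a n‖ ^ 2) atTop (𝓝 0) :=
    squeeze_zero (fun _ => by positivity) (fun n => hΦ (a n)) (by simpa using hz.const_mul C)
  rw [T.q_eq_zero_iff _ ha]
  simpa using hsq.sqrt

end SeqAlg

lemma map_nonneg_of_map_star_mul_self_nonneg {R S F : Type*} [NonUnitalSemiring R]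
    [PartialOrder R] [StarRing R] [StarOrderedRing R] [AddCommMonoid S] [PartialOrder S]
    [IsOrderedAddMonoid S] [FunLike F R S] [AddMonoidHomClass F R S] (f : F)
    (hf : ∀ x, 0 ≤ f (star x * x)) {x : R} (hx : 0 ≤ x) : 0 ≤ f x := by
  rw [StarOrderedRing.nonneg_iff] at hx
  induction hx using AddSubmonoid.closure_induction with
  | mem _ h => obtain ⟨s, rfl⟩ := h; exact hf s
  | zero => rw [map_zero]
  | add _ _ _ _ ha hb => rw [map_add]; exact add_nonneg ha hb

lemma IsStarProjection.central_mul_mul_mul {R : Type*} [Ring R] [StarRing R] {c c' e j : R}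
    (hc : ∀ z, Commute c z) (hc' : ∀ z, Commute c' z) (hcs : star c = c) (hcc' : c * c' = 1)
    (he : IsStarProjection e) (hj : star j = j) (hjej : j * e * j = c' * j) :
    IsStarProjection (c * (e * j * e)) := by
  have hsq : e * j * e * (e * j * e) = c' * (e * j * e) :=
    calc e * j * e * (e * j * e) = e * (j * (e * e) * j) * e := by noncomm_ring
      _ = e * c' * j * e := by rw [he.isIdempotentElem.eq, hjej]; noncomm_ring
      _ = c' * (e * j * e) := by rw [← (hc' e).eq]; noncomm_ring
  constructor
  · calc c * (e * j * e) * (c * (e * j * e)) = c * (e * j * e * c) * (e * j * e) := by noncomm_ring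
      _ = c * c * (e * j * e * (e * j * e)) := by rw [← (hc _).eq]; noncomm_ring
      _ = c * (c * c') * (e * j * e) := by rw [hsq]; noncomm_ring
      _ = c * (e * j * e) := by rw [hcc', mul_one]
  · rw [IsSelfAdjoint, star_mul, star_mul, star_mul, he.isSelfAdjoint.star_eq, hj, hcs,
      ← (hc _).eq, mul_assoc]

namespace PositiveLinearMap

variable {B : Type*} [CStarAlgebra B] [PartialOrder B] [StarOrderedRing B]
  (Φ : B →ₚ[ℂ] B) {M : StarSubalgebra ℂ B}

/-- Cauchy–Schwarz for the `M`-valued inner product `⟨x, y⟩ = Φ (x⋆ y)`: expand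
`0 ≤ Φ (|x c - s y|²)` with `c = ⟨x, y⟩`. -/
theorem star_mul_self_le_smul_of_bimodule
    (hΦ : ∀ p ∈ M, ∀ q ∈ M, ∀ y, Φ (p * y * q) = p * Φ y * q)
    {x y : B} (hc : Φ (star x * y) ∈ M) {s : ℝ} (hs : 0 < s) (hx : ‖Φ (star x * x)‖ ≤ s) :
    star (Φ (star x * y)) * Φ (star x * y) ≤ s • Φ (star y * y) := by
  set c := Φ (star x * y)
  have hcs : star c ∈ M := star_mem hc
  have hleft : Φ (star c * (star x * y)) = star c * c := by
    simpa using hΦ _ hcs 1 M.one_mem (star x * y)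
  have hright : Φ (star y * x * c) = star c * c := by
    rw [← one_mul (star y * x), hΦ 1 M.one_mem c hc, one_mul,
      show star y * x = star (star x * y) by simp, map_star]
  have hmid : Φ (star c * (star x * x) * c) = star c * Φ (star x * x) * c := hΦ _ hcs c hc _
  have hexpand : Φ (star (x * c - s • y) * (x * c - s • y))
      = star c * Φ (star x * x) * c - (2 * s) • (star c * c) + (s ^ 2) • Φ (star y * y) := by
    have : star (x * c - s • y) * (x * c - s • y) = star c * (star x * x) * c
        - s • (star c * (star x * y)) - s • (star y * x * c) + (s ^ 2) • (star y * y) := by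
      simp only [star_sub, star_mul, star_smul, star_trivial, sub_mul, mul_sub, smul_mul_assoc,
        mul_smul_comm, mul_assoc]
      module
    rw [this]
    simp only [map_add, map_sub, map_smul_of_tower, hmid, hleft, hright]
    module
  have hconj : star c * Φ (star x * x) * c ≤ s • (star c * c) :=
    (CStarAlgebra.star_left_conjugate_le_norm_smul
      (Φ.map_nonneg (star_mul_self_nonneg x)).isSelfAdjoint).trans
      (smul_le_smul_of_nonneg_right hx (star_mul_self_nonneg c))
  have h0 : 0 ≤ s • (s • Φ (star y * y) - star c * c) :=
    calc (0 : B) ≤ Φ (star (x * c - s • y) * (x * c - s • y)) :=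
          Φ.map_nonneg (star_mul_self_nonneg _)
      _ ≤ s • (star c * c) - (2 * s) • (star c * c) + (s ^ 2) • Φ (star y * y) := by
          rw [hexpand]; gcongr
      _ = _ := by module
  exact sub_nonneg.mp ((smul_nonneg_iff_nonneg_of_pos_left hs).mp h0)

theorem norm_sq_le_of_bimodule (hΦ : ∀ p ∈ M, ∀ q ∈ M, ∀ y, Φ (p * y * q) = p * Φ y * q)
    {x y : B} (hc : Φ (star x * y) ∈ M) {s : ℝ} (hs : 0 < s) (hx : ‖Φ (star x * x)‖ ≤ s) :
    ‖Φ (star x * y)‖ ^ 2 ≤ s * ‖Φ (star y * y)‖ := by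
  rw [sq, ← CStarRing.norm_star_mul_self, ← abs_of_pos hs, ← Real.norm_eq_abs, ← norm_smul]
  exact CStarAlgebra.norm_le_norm_of_nonneg_of_le (star_mul_self_nonneg _)
    (Φ.star_mul_self_le_smul_of_bimodule hΦ hc hs hx)

/-- Pimsner–Popa: write `y = ∑ uᵢ Φ (vᵢ y)` and bound each `Φ (vᵢ y)` by Cauchy–Schwarz. -/
theorem exists_norm_sq_le_of_quasiBasis (hΦ : ∀ p ∈ M, ∀ q ∈ M, ∀ y, Φ (p * y * q) = p * Φ y * q)
    (hM : ∀ y, Φ y ∈ M) {n : ℕ} (u v : Fin n → B) (huv : ∀ y, y = ∑ i, u i * Φ (v i * y)) :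
    ∃ C, ∀ y, ‖y‖ ^ 2 ≤ C * ‖Φ (star y * y)‖ := by
  set s : Fin n → ℝ := fun i => ‖Φ (v i * star (v i))‖ + 1
  refine ⟨(∑ i, ‖u i‖ ^ 2) * ∑ i, s i, fun y => ?_⟩
  have hterm (i : Fin n) : ‖Φ (v i * y)‖ ^ 2 ≤ s i * ‖Φ (star y * y)‖ := by
    simpa using Φ.norm_sq_le_of_bimodule hΦ (x := star (v i)) (by simpa using hM _)
      (by positivity) (by simp [s])
  calc ‖y‖ ^ 2 ≤ (∑ i, ‖u i‖ * ‖Φ (v i * y)‖) ^ 2 := by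
        gcongr
        conv_lhs => rw [huv y]
        exact (norm_sum_le _ _).trans (sum_le_sum fun i _ => norm_mul_le _ _)
    _ ≤ (∑ i, ‖u i‖ ^ 2) * ∑ i, ‖Φ (v i * y)‖ ^ 2 := sum_mul_sq_le_sq_mul_sq _ _ _
    _ ≤ (∑ i, ‖u i‖ ^ 2) * ∑ i, s i * ‖Φ (star y * y)‖ := by gcongr with i; exact hterm i
    _ = _ := by rw [← sum_mul, mul_assoc]

end PositiveLinearMap

section Watatani

variable {B : Type*} [NormedRing B] [StarRing B] [CStarRing B] [NormedAlgebra ℂ B]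
  [CompleteSpace B] [StarModule ℂ B] [PartialOrder B] [StarOrderedRing B]

noncomputable abbrev cstarAlgebraOfCStarRing : CStarAlgebra B :=
  { ‹NormedRing B›, ‹StarRing B›, ‹CStarRing B›, ‹CompleteSpace B›,
    ‹NormedAlgebra ℂ B›, ‹StarModule ℂ B› with }

attribute [local instance] cstarAlgebraOfCStarRing

namespace WatataniSetup

variable (S : WatataniSetup B)

noncomputable def condExp : B →ₚ[ℂ] B :=
  .mk₀ { toFun := S.E, map_add' := S.E_add, map_smul' := S.E_smul }
    fun _ => map_nonneg_of_map_star_mul_self_nonneg (F := B →ₗ[ℂ] B) _ S.E_pos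

noncomputable def dualCondExp : B →ₚ[ℂ] B :=
  .mk₀ { toFun := S.Ehat, map_add' := S.Ehat_add, map_smul' := S.Ehat_smul }
    fun _ => map_nonneg_of_map_star_mul_self_nonneg (F := B →ₗ[ℂ] B) _ S.Ehat_pos

lemma commute_indInv (b : B) : Commute S.indInv b :=
  Commute.units_inv_left (u := ⟨S.ind, S.indInv, S.ind_mul_inv, S.inv_mul_ind⟩) (S.ind_central b)

lemma Ehat_mul_eP {a : B} (ha : a ∈ S.A) : S.Ehat (a * S.eP) = S.indInv * a := by
  simpa using S.Ehat_eP a ha 1 S.A.one_mem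

lemma dualCondExp_apply (x : B) : S.dualCondExp x = S.Ehat x := rfl

lemma E_mul_of_mem {p : B} (hp : p ∈ S.P) (x : B) : S.E (p * x) = p * S.E x := by
  simpa using S.E_bimod p hp 1 S.P.one_mem x

lemma eq_of_mul_eP_eq {a b : B} (ha : a ∈ S.A) (hb : b ∈ S.A) (h : a * S.eP = b * S.eP) :
    a = b := by
  have := congrArg (fun z => S.ind * S.Ehat z) h
  simpa only [S.Ehat_mul_eP ha, S.Ehat_mul_eP hb, ← mul_assoc, S.ind_mul_inv, one_mul] using this

variable {S} {n : ℕ} {x y : Fin n → B}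

lemma sum_quasiBasis (hx : ∀ i, x i ∈ S.A) (hy : ∀ i, y i ∈ S.A)
    (h1 : 1 = ∑ i, x i * S.eP * y i) {a : B} (ha : a ∈ S.A) :
    a = ∑ i, x i * S.E (y i * a) := by
  have hyaA (i : Fin n) : y i * a ∈ S.A := mul_mem (hy i) ha
  refine S.eq_of_mul_eP_eq ha
    (sum_mem fun i _ => mul_mem (hx i) (S.le (S.E_mem _ (hyaA i)))) ?_
  calc a * S.eP = ∑ i, x i * (S.eP * (y i * a) * S.eP) := by
        rw [← one_mul (a * S.eP), h1, sum_mul]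
        exact sum_congr rfl fun i _ => by noncomm_ring
    _ = (∑ i, x i * S.E (y i * a)) * S.eP := by
        rw [sum_mul]
        exact sum_congr rfl fun i _ => by rw [S.eP_conj _ (hyaA i), mul_assoc]

lemma sum_dualQuasiBasis (hx : ∀ i, x i ∈ S.A) (hy : ∀ i, y i ∈ S.A)
    (h1 : 1 = ∑ i, x i * S.eP * y i) (z : B) :
    z = ∑ i, (S.ind * x i * S.eP) * S.dualCondExp (S.eP * y i * z) := by
  obtain ⟨m, u, v, hu, hv, rfl⟩ := S.span z
  simp only [mul_sum, map_sum]
  rw [sum_comm]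
  refine sum_congr rfl fun j _ => ?_
  have hyuA (i : Fin n) : y i * u j ∈ S.A := mul_mem (hy i) (hu j)
  have hterm (i : Fin n) : (S.ind * x i * S.eP) * S.dualCondExp (S.eP * y i * (u j * S.eP * v j))
      = x i * S.E (y i * u j) * S.eP * v j := by
    have hEP : S.E (y i * u j) ∈ S.P := S.E_mem _ (hyuA i)
    rw [dualCondExp_apply,
      show S.eP * y i * (u j * S.eP * v j) = S.eP * (y i * u j) * S.eP * v j by noncomm_ring,
      S.eP_conj _ (hyuA i), S.Ehat_eP _ (S.le hEP) _ (hv j)]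
    calc S.ind * x i * S.eP * (S.indInv * (S.E (y i * u j) * v j))
        = S.ind * (x i * S.eP * S.indInv) * (S.E (y i * u j) * v j) := by noncomm_ring
      _ = S.ind * S.indInv * x i * (S.eP * S.E (y i * u j)) * v j := by
          rw [← (S.commute_indInv _).eq]; noncomm_ring
      _ = x i * S.E (y i * u j) * S.eP * v j := by
          rw [S.ind_mul_inv, (S.eP_comm _ hEP).eq]; noncomm_ring
  rw [sum_congr rfl fun i _ => hterm i, ← sum_mul, ← sum_mul,
    ← S.sum_quasiBasis hx hy h1 (hu j)]

variable (S)

theorem exists_norm_sq_le_Ehat : ∃ C, ∀ y : B, ‖y‖ ^ 2 ≤ C * ‖S.Ehat (star y * y)‖ := by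
  obtain ⟨n, x, y, hx, hy, h1⟩ := S.span 1
  exact S.dualCondExp.exists_norm_sq_le_of_quasiBasis S.Ehat_bimod S.Ehat_mem _ _
    (sum_dualQuasiBasis hx hy h1)

variable {Binf : Type*} [Ring Binf] [StarRing Binf] [Algebra ℂ Binf] (T : SeqAlg B Binf)

lemma commute_incl_ind (z : Binf) : Commute (T.incl S.ind) z := T.commute_incl S.ind_central z

lemma commute_incl_indInv (z : Binf) : Commute (T.incl S.indInv) z :=
  T.commute_incl S.commute_indInv z

lemma incl_ind_mul_incl_indInv : T.incl S.ind * T.incl S.indInv = 1 := by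
  rw [T.incl_mul, S.ind_mul_inv, T.incl_one]

lemma eP_mul_mul_eP_inf {z : Binf} (hz : z ∈ T.subAlg S.A) :
    T.incl S.eP * z * T.incl S.eP = T.map S.condExp z * T.incl S.eP := by
  obtain ⟨a, ha, haA, rfl⟩ := hz
  have hc := isBddSeq_const S.eP
  rw [T.map_q _ ha, SeqAlg.incl, ← T.q_mul _ _ hc ha, ← T.q_mul _ _ (hc.mul ha) hc,
    ← T.q_mul _ _ (ha.map _) hc]
  exact congrArg T.q (funext fun n => S.eP_conj _ (haA n))

lemma dualCondExp_inf_mul_eP_mul {u v : Binf} (hu : u ∈ T.subAlg S.A) (hv : v ∈ T.subAlg S.A) :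
    T.map S.dualCondExp (u * T.incl S.eP * v) = T.incl S.indInv * (u * v) := by
  obtain ⟨a, ha, haA, rfl⟩ := hu
  obtain ⟨b, hb, hbA, rfl⟩ := hv
  have hc := isBddSeq_const S.eP
  rw [SeqAlg.incl, SeqAlg.incl, ← T.q_mul _ _ ha hc, ← T.q_mul _ _ (ha.mul hc) hb,
    T.map_q _ ((ha.mul hc).mul hb), ← T.q_mul _ _ ha hb,
    ← T.q_mul _ _ (isBddSeq_const _) (ha.mul hb)]
  exact congrArg T.q (funext fun n => S.Ehat_eP _ (haA n) _ (hbA n))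

lemma eq_zero_of_dualCondExp_inf_star_mul_self {z : Binf}
    (hz : T.map S.dualCondExp (star z * z) = 0) : z = 0 := by
  obtain ⟨C, hC⟩ := S.exists_norm_sq_le_Ehat
  exact T.eq_zero_of_map_star_mul_self_eq_zero S.dualCondExp hC hz

variable {S T} {e : Binf}

/-- `e - (Index E) e e_P e` is a projection (as `e_P e e_P = (Index E)⁻¹ e_P`) killed by `Ê^∞`. -/
lemma rohlin_eq_ind_mul (he : e ∈ T.subAlg S.A) (he_proj : IsStarProjection e)
    (he_exp : T.map S.condExp e = T.incl S.indInv) :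
    e = T.incl S.ind * (e * T.incl S.eP * e) := by
  set c := T.incl S.ind
  set j := T.incl S.eP
  have hf : IsStarProjection (c * (e * j * e)) :=
    .central_mul_mul_mul (S.commute_incl_ind T) (S.commute_incl_indInv T)
      (by rw [T.star_incl, S.ind_pos.isSelfAdjoint.star_eq]) (S.incl_ind_mul_incl_indInv T)
      he_proj (by rw [T.star_incl, S.eP_star]) (by rw [S.eP_mul_mul_eP_inf T he, he_exp])
  have hg := hf.sub_of_mul_eq_left he_proj (by simp only [mul_assoc, he_proj.isIdempotentElem.eq])
  have hce : c * e ∈ T.subAlg S.A := T.mul_mem_subAlg (T.incl_mem_subAlg (S.le S.ind_mem)) he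
  have hEg : T.map S.dualCondExp (e - c * (e * j * e)) = 0 := by
    rw [T.map_sub, T.map_eq_self _ S.Ehat_fix he, ← mul_assoc, ← mul_assoc,
      S.dualCondExp_inf_mul_eP_mul T hce he, mul_assoc, he_proj.isIdempotentElem.eq,
      ← mul_assoc, (S.commute_incl_indInv T _).eq, S.incl_ind_mul_incl_indInv T, one_mul,
      sub_self]
  refine (sub_eq_zero.mp (S.eq_zero_of_dualCondExp_inf_star_mul_self T ?_))
  rwa [hg.isSelfAdjoint.star_eq, hg.isIdempotentElem.eq]

/-- By `rohlin_eq_ind_mul`, `d d⋆ = (Index E) d e_P d⋆`, and `e_P d e_P = E^∞(d) e_P = 0`;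
hence `(d⋆ e_P)⋆ (d⋆ e_P) = 0`, so `d⋆ e_P = 0` and `d⋆ = (Index E) Ê^∞(d⋆ e_P) = 0`. -/
lemma eq_zero_of_mul_rohlin (he : e ∈ T.subAlg S.A) (he_proj : IsStarProjection e)
    (he_exp : T.map S.condExp e = T.incl S.indInv) {d : Binf} (hd : d ∈ T.subAlg S.A)
    (hde : d * e = d) (hEd : T.map S.condExp d = 0) : d = 0 := by
  set c := T.incl S.ind
  set j := T.incl S.eP
  have hed : e * star d = star d := by rw [← he_proj.isSelfAdjoint.star_eq, ← star_mul, hde]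
  have hdd : d * star d = c * (d * j * star d) :=
    calc d * star d = d * (c * (e * j * e)) * star d := by
          rw [← rohlin_eq_ind_mul he he_proj he_exp, hde]
      _ = (d * c) * (e * j * e) * star d := by noncomm_ring
      _ = c * ((d * e) * j * (e * star d)) := by
          rw [← (S.commute_incl_ind T d).eq]; noncomm_ring
      _ = c * (d * j * star d) := by rw [hde, hed]
  have hjdj : j * d * j = 0 := by rw [S.eP_mul_mul_eP_inf T hd, hEd, zero_mul]
  have hdj : star d * j = 0 := by
    have hj : star j = j := by rw [T.star_incl, S.eP_star]
    have h0 : star (star d * j) * (star d * j) = 0 :=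
      calc star (star d * j) * (star d * j) = j * (d * star d) * j := by
            rw [star_mul, star_star, hj]; noncomm_ring
        _ = (j * c) * (d * j * star d) * j := by rw [hdd]; noncomm_ring
        _ = c * ((j * d * j) * star d * j) := by
            rw [← (S.commute_incl_ind T j).eq]; noncomm_ring
        _ = 0 := by rw [hjdj, zero_mul, zero_mul, mul_zero]
    exact S.eq_zero_of_dualCondExp_inf_star_mul_self T (by rw [h0, T.map_zero])
  have hd' : T.incl S.indInv * star d = 0 := by
    rw [← mul_one (star d), ← S.dualCondExp_inf_mul_eP_mul T (T.star_mem_subAlg hd)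
      T.one_mem_subAlg, hdj, zero_mul, T.map_zero]
  rw [← star_eq_zero, ← one_mul (star d), ← S.incl_ind_mul_incl_indInv T, mul_assoc, hd',
    mul_zero]

lemma eq_map_condExp {Einf : Binf → Binf}
    (hEinf : ∀ a : ℕ → B, IsBddSeq a → Einf (T.q a) = T.q fun n => S.E (a n)) :
    Einf = T.map S.condExp := funext fun z => by
  obtain ⟨a, ha, rfl⟩ := T.surj z
  rw [hEinf a ha, T.map_q _ ha]
  rfl

lemma ind_mul_condExp_inf_mem {z : Binf} (hz : z ∈ T.subAlg S.A) :
    T.incl S.ind * T.map S.condExp z ∈ T.subAlg S.P :=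
  T.mul_mem_subAlg (T.incl_mem_subAlg S.ind_mem) (T.map_mem_subAlg _ S.E_mem hz)

lemma condExp_inf_mul_rohlin (he_exp : T.map S.condExp e = T.incl S.indInv) {y : Binf}
    (hy : y ∈ T.subAlg S.P) : T.map S.condExp (y * e) = y * T.incl S.indInv := by
  rw [T.map_mul_left _ (fun _ hp => S.E_mul_of_mem hp) hy, he_exp]

lemma mul_rohlin_eq (he : e ∈ T.subAlg S.A) (he_proj : IsStarProjection e)
    (he_exp : T.map S.condExp e = T.incl S.indInv) {x : Binf} (hx : x ∈ T.subAlg S.A) :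
    x * e = T.incl S.ind * T.map S.condExp (x * e) * e := by
  have hxe := T.mul_mem_subAlg hx he
  have hy := ind_mul_condExp_inf_mem hxe
  refine sub_eq_zero.mp (eq_zero_of_mul_rohlin he he_proj he_exp
    (T.sub_mem_subAlg hxe (T.mul_mem_subAlg (T.subAlg_mono S.le hy) he)) ?_ ?_)
  · simp only [sub_mul, mul_assoc, he_proj.isIdempotentElem.eq]
  · rw [T.map_sub, condExp_inf_mul_rohlin he_exp hy, mul_assoc,
      ← (S.commute_incl_indInv T _).eq, ← mul_assoc, S.incl_ind_mul_incl_indInv T, one_mul,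
      sub_self]

lemma eq_ind_mul_condExp_inf (he_exp : T.map S.condExp e = T.incl S.indInv) {x y : Binf}
    (hy : y ∈ T.subAlg S.P) (hxy : x * e = y * e) :
    y = T.incl S.ind * T.map S.condExp (x * e) := by
  rw [hxy, condExp_inf_mul_rohlin he_exp hy, ← mul_assoc, (S.commute_incl_ind T y).eq,
    mul_assoc, S.incl_ind_mul_incl_indInv T, mul_one]

end WatataniSetup

end Watatani

theorem rohlin_compression_unique_element_general
    {B : Type*} [NormedRing B] [StarRing B] [CStarRing B] [NormedAlgebra ℂ B]
    [CompleteSpace B] [StarModule ℂ B] [PartialOrder B] [StarOrderedRing B]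
    (S : WatataniSetup B)
    {Binf : Type*} [Ring Binf] [StarRing Binf] [Algebra ℂ Binf] (T : SeqAlg B Binf)
    (Einf : Binf → Binf)
    (hEinf : ∀ a : ℕ → B, IsBddSeq a → Einf (T.q a) = T.q fun n => S.E (a n))
    -- the Rohlin projection `e ∈ A_∞`
    (e : Binf) (he_rep : ∃ a : ℕ → B, IsBddSeq a ∧ (∀ n, a n ∈ S.A) ∧ T.q a = e)
    (he_idem : e * e = e) (he_star : star e = e)
    (he_exp : Einf e = T.incl S.indInv) :
    ∀ x ∈ T.subAlg (S.A : Set B),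
      (T.incl S.ind * Einf (x * e)) ∈ T.subAlg (S.P : Set B) ∧
      x * e = (T.incl S.ind * Einf (x * e)) * e ∧
      ∀ y ∈ T.subAlg (S.P : Set B), x * e = y * e →
        y = T.incl S.ind * Einf (x * e) := by
  obtain rfl := WatataniSetup.eq_map_condExp hEinf
  have he : e ∈ T.subAlg S.A := he_rep
  have he_proj : IsStarProjection e := ⟨he_idem, he_star⟩
  intro x hx
  exact ⟨WatataniSetup.ind_mul_condExp_inf_mem (T.mul_mem_subAlg hx he),
    WatataniSetup.mul_rohlin_eq he he_proj he_exp hx,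
    fun y hy hxy => WatataniSetup.eq_ind_mul_condExp_inf he_exp hy hxy⟩

/-- if `E` has the Rohlin property with Rohlin projection `e ∈ A_∞`,
then for every `x ∈ A^∞` there is a unique `y ∈ P^∞` with `x e = y e`; explicitly
`y = (Index E) E^∞(x e)`. -/
theorem rohlin_compression_unique_element
    {B : Type*} [NormedRing B] [StarRing B] [CStarRing B] [NormedAlgebra ℂ B]
    [CompleteSpace B] [StarModule ℂ B] [PartialOrder B] [StarOrderedRing B]
    (S : WatataniSetup B)
    {Binf : Type*} [Ring Binf] [StarRing Binf] [Algebra ℂ Binf] (T : SeqAlg B Binf)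
    (Einf : Binf → Binf)
    (hEinf : ∀ a : ℕ → B, IsBddSeq a → Einf (T.q a) = T.q fun n => S.E (a n))
    -- the Rohlin projection `e ∈ A_∞`
    (e : Binf) (he_rep : ∃ a : ℕ → B, IsBddSeq a ∧ (∀ n, a n ∈ S.A) ∧ T.q a = e)
    (he_idem : e * e = e) (he_star : star e = e)
    (he_comm : ∀ x ∈ S.A, Commute e (T.incl x))
    (he_exp : Einf e = T.incl S.indInv)
    (he_inj : ∀ x ∈ S.A, T.incl x * e = 0 → x = 0) :
    ∀ x ∈ T.subAlg (S.A : Set B),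
      (T.incl S.ind * Einf (x * e)) ∈ T.subAlg (S.P : Set B) ∧
      x * e = (T.incl S.ind * Einf (x * e)) * e ∧
      ∀ y ∈ T.subAlg (S.P : Set B), x * e = y * e →
        y = T.incl S.ind * Einf (x * e) :=
  rohlin_compression_unique_element_general S T Einf hEinf e he_rep he_idem he_star he_exp
end

section
/- Let G be a finite group acting on a unital C*-algebra Q with Rohlin projections {e_g}_{g∈G} ⊆ Q_∞, and let H ≤ G be a subgroup. Set e_H = ∑_{h∈H} e_h, let A = Q^H and P = Q^G be the fixed point algebras, and let F : A → P be the restriction of the canonical expectation E(x) = (1/|G|) ∑_{g∈G} α_g(x). Then e_H ∈ A_∞, F^∞(e_H) = (|H|/|G|)·1, and Index F = |G|/|H|; hence the inclusion P ⊆ A has the Rohlin property (given injectivity of x ↦ x e_H). -/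
open Finset

section BoundedSequences

lemma IsBddSeq.const {E : Type*} [Norm E] (x : E) : IsBddSeq fun _ : ℕ => x :=
  ⟨‖x‖, fun _ => le_rfl⟩

lemma IsBddSeq.comp_of_norm_le {E F : Type*} [Norm E] [Norm F] {a : ℕ → E} (ha : IsBddSeq a)
    {f : E → F} (hf : ∀ x, ‖f x‖ ≤ ‖x‖) : IsBddSeq fun n => f (a n) :=
  let ⟨C, hC⟩ := ha
  ⟨C, fun n => (hf _).trans (hC n)⟩

variable {E : Type*} [SeminormedAddCommGroup E]

lemma IsBddSeq.sum {ι : Type*} (s : Finset ι) {a : ι → ℕ → E} (ha : ∀ i ∈ s, IsBddSeq (a i)) :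
    IsBddSeq fun n => ∑ i ∈ s, a i n := by
  choose C hC using ha
  refine ⟨∑ i ∈ s.attach, C i.1 i.2, fun n => (norm_sum_le _ _).trans ?_⟩
  rw [← sum_attach]
  exact sum_le_sum fun i _ => hC i.1 i.2 n

lemma IsBddSeq.const_smul {𝕜 : Type*} [NormedField 𝕜] [NormedSpace 𝕜 E] (c : 𝕜) {a : ℕ → E}
    (ha : IsBddSeq a) : IsBddSeq fun n => c • a n :=
  let ⟨C, hC⟩ := ha
  ⟨‖c‖ * C, fun n =>
    (norm_smul c (a n)).trans_le (mul_le_mul_of_nonneg_left (hC n) (norm_nonneg c))⟩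

end BoundedSequences

namespace SeqAlg

variable {A : Type*} [NormedRing A] [StarRing A] [NormedAlgebra ℂ A]
  {Ainf : Type*} [Ring Ainf] [StarRing Ainf] [Algebra ℂ Ainf] (S : SeqAlg A Ainf)

lemma q_zero : S.q 0 = 0 :=
  (S.q_eq_zero_iff 0 (IsBddSeq.const 0)).2 (by simp)

lemma q_sum {ι : Type*} (s : Finset ι) {a : ι → ℕ → A} (ha : ∀ i ∈ s, IsBddSeq (a i)) :
    S.q (fun n => ∑ i ∈ s, a i n) = ∑ i ∈ s, S.q (a i) := by
  classical
  induction s using Finset.induction_on with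
  | empty => exact S.q_zero
  | insert i s hi ih =>
    have hs : ∀ j ∈ s, IsBddSeq (a j) := fun j hj => ha j (mem_insert_of_mem hj)
    simp only [sum_insert hi]
    rw [← ih hs, ← S.q_add _ _ (ha i (mem_insert_self i s)) (IsBddSeq.sum s hs)]
    rfl

lemma eq_zero_of_incl_eq_zero {x : A} (hx : S.incl x = 0) : x = 0 :=
  norm_eq_zero.1 <| tendsto_nhds_unique tendsto_const_nhds
    ((S.q_eq_zero_iff _ (IsBddSeq.const x)).1 hx)

lemma map_sum_of_q {f : A →+ A} (hf : ∀ a, IsBddSeq a → IsBddSeq fun n => f (a n))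
    {T : Ainf → Ainf} (hT : ∀ a, IsBddSeq a → T (S.q a) = S.q fun n => f (a n))
    {ι : Type*} (s : Finset ι) (z : ι → Ainf) :
    T (∑ i ∈ s, z i) = ∑ i ∈ s, T (z i) := by
  choose a ha hqa using fun i => S.surj (z i)
  have hsum : ∑ i ∈ s, z i = S.q fun n => ∑ i ∈ s, a i n := by
    rw [S.q_sum s fun i _ => ha i]
    exact sum_congr rfl fun i _ => (hqa i).symm
  rw [hsum, hT _ (IsBddSeq.sum s fun i _ => ha i)]
  simp_rw [map_sum]
  rw [S.q_sum s fun i _ => hf _ (ha i)]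
  exact sum_congr rfl fun i _ => by rw [← hqa i, hT _ (ha i)]

lemma incl_mul_eq_of_intertwines {φ : A → A} (hφ : ∀ a, IsBddSeq a → IsBddSeq fun n => φ (a n))
    {T : Ainf → Ainf} (hT : ∀ a, IsBddSeq a → T (S.q a) = S.q fun n => φ (a n))
    {d : A} (hd : ∀ x, d * x = φ x * d) (z : Ainf) :
    S.incl d * z = T z * S.incl d := by
  obtain ⟨a, ha, rfl⟩ := S.surj z
  rw [hT a ha, SeqAlg.incl, ← S.q_mul _ _ (IsBddSeq.const d) ha,
    ← S.q_mul _ _ (hφ a ha) (IsBddSeq.const d)]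
  exact congrArg S.q (funext fun n => hd (a n))

end SeqAlg

section Average

variable (k Γ : Type*) {M : Type*} [Field k] [Group Γ] [Fintype Γ] [AddCommGroup M] [Module k M]
  [DistribMulAction Γ M] [SMulCommClass Γ k M]

noncomputable def average : M →ₗ[k] M :=
  (Fintype.card Γ : k)⁻¹ • ∑ g : Γ, DistribSMul.toLinearMap k M g

variable {k Γ}

lemma average_apply (x : M) : average k Γ x = (Fintype.card Γ : k)⁻¹ • ∑ g : Γ, g • x := by
  simp [average]

lemma smul_average (g : Γ) (x : M) : g • average k Γ x = average k Γ x := by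
  rw [average_apply, smul_comm, smul_sum]
  simp_rw [smul_smul]
  exact congrArg _ (Equiv.sum_comp (Equiv.mulLeft g) (· • x))

lemma average_smul (g : Γ) (x : M) : average k Γ (g • x) = average k Γ x := by
  simp_rw [average_apply, smul_smul]
  exact congrArg _ (Equiv.sum_comp (Equiv.mulRight g) (· • x))

lemma average_eq_self [CharZero k] {x : M} (hx : ∀ g : Γ, g • x = x) : average k Γ x = x := by
  rw [average_apply, sum_congr rfl fun g _ => hx g, sum_const, card_univ,
    ← Nat.cast_smul_eq_nsmul k, smul_smul, inv_mul_cancel₀ (by simp), one_smul]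

lemma average_average_subgroup [CharZero k] (H : Subgroup Γ) [Fintype H] (x : M) :
    average k Γ (average k H x) = average k Γ x := by
  rw [average_apply (Γ := H), map_smul, map_sum]
  simp_rw [Subgroup.smul_def, average_smul]
  rw [sum_const, card_univ, ← Nat.cast_smul_eq_nsmul k, smul_smul, inv_mul_cancel₀ (by simp),
    one_smul]

lemma IsBddSeq.average {𝕜 E : Type*} [NormedField 𝕜] [SeminormedAddCommGroup E] [NormedSpace 𝕜 E]
    [DistribMulAction Γ E] [SMulCommClass Γ 𝕜 E]
    (hbdd : ∀ (g : Γ) (a : ℕ → E), IsBddSeq a → IsBddSeq fun n => g • a n)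
    {a : ℕ → E} (ha : IsBddSeq a) : IsBddSeq fun n => average 𝕜 Γ (a n) := by
  simp_rw [average_apply]
  exact (IsBddSeq.sum univ fun g _ => hbdd g a ha).const_smul _

end Average

section AverageRing

variable {k Γ R : Type*} [Field k] [Group Γ] [Fintype Γ] [Ring R] [Algebra k R]
  [MulSemiringAction Γ R] [SMulCommClass Γ k R]

lemma average_mul_of_fixed (x : R) {p : R} (hp : ∀ g : Γ, g • p = p) :
    average k Γ (x * p) = average k Γ x * p := by
  simp_rw [average_apply, smul_mul_assoc, sum_mul, smul_mul', hp]

lemma average_fixed_mul (x : R) {p : R} (hp : ∀ g : Γ, g • p = p) :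
    average k Γ (p * x) = p * average k Γ x := by
  simp_rw [average_apply, mul_smul_comm, mul_sum, smul_mul', hp]

lemma sum_average_mul_average [CharZero k] {ι : Type*} [Fintype ι] (u v : ι → R)
    (huv : ∀ g : Γ, g ≠ 1 → ∑ i, u i * g • v i = 0) :
    ∑ i, average k Γ (u i) * average k Γ (v i) =
      average k Γ ((Fintype.card Γ : k)⁻¹ • ∑ i, u i * v i) := by
  have hsum : ∑ i, u i * average k Γ (v i) = (Fintype.card Γ : k)⁻¹ • ∑ i, u i * v i := by
    simp_rw [average_apply, mul_smul_comm, ← smul_sum, mul_sum]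
    rw [sum_comm, Fintype.sum_eq_single 1 huv]
    simp_rw [one_smul]
  rw [← hsum, map_sum]
  exact sum_congr rfl fun i _ => (average_mul_of_fixed _ (smul_average · (v i))).symm

end AverageRing

section QuasiBasis

variable {R : Type*} [Ring R]

/-- Watatani's quasi-basis for `E` on `s`; the index of `E` is then `∑ i, u i * v i`. -/
def IsQuasiBasis (E : R → R) (s : Set R) {ι : Type*} [Fintype ι] (u v : ι → R) : Prop :=
  ∀ a ∈ s, a = ∑ i, u i * E (v i * a) ∧ a = ∑ i, E (a * u i) * v i

lemma IsQuasiBasis.twisted_sum_mul {Γ : Type*} [Group Γ] [MulSemiringAction Γ R] {E : R → R}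
    (hE : ∀ (g : Γ) (y : R), g • E y = E y) {ι : Type*} [Fintype ι] {u v : ι → R}
    (huv : IsQuasiBasis E Set.univ u v) (s : Γ) (x : R) :
    (∑ i, u i * s • v i) * x = (s⁻¹ • x) * ∑ i, u i * s • v i := by
  have hright : ∀ i, s • v i * x = ∑ j, E (v i * (s⁻¹ • x * u j)) * s • v j := fun i => by
    conv_lhs => rw [← smul_inv_smul s x, ← smul_mul', (huv (v i * s⁻¹ • x) trivial).2]
    simp_rw [smul_sum, smul_mul', hE, mul_assoc]
  calc (∑ i, u i * s • v i) * x
      = ∑ j, (∑ i, u i * E (v i * (s⁻¹ • x * u j))) * s • v j := by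
        simp_rw [sum_mul, mul_assoc, hright, mul_sum]
        exact sum_comm
    _ = ∑ j, (s⁻¹ • x * u j) * s • v j :=
        sum_congr rfl fun j _ => by rw [← (huv _ trivial).1]
    _ = (s⁻¹ • x) * ∑ i, u i * s • v i := by
        simp_rw [mul_sum, mul_assoc]

variable {k Γ : Type*} [Field k] [CharZero k] [Group Γ] [Fintype Γ] [Algebra k R]
  [MulSemiringAction Γ R] [SMulCommClass Γ k R]

lemma IsQuasiBasis.average_subgroup (H : Subgroup Γ) [Fintype H] {ι : Type*} [Fintype ι]
    {u v : ι → R} (huv : IsQuasiBasis (average k Γ) Set.univ u v) :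
    IsQuasiBasis (average k Γ) (MulAction.fixedPoints H R)
      (fun i => average k H (u i)) (fun i => average k H (v i)) := by
  intro a ha
  have hfix (y : R) (h : H) : h • average k Γ y = average k Γ y := smul_average (h : Γ) y
  constructor
  · calc a = average k H (∑ i, u i * average k Γ (v i * a)) := by
          rw [← (huv a trivial).1, average_eq_self ha]
      _ = ∑ i, average k H (u i) * average k Γ (average k H (v i) * a) := by
          simp_rw [map_sum, average_mul_of_fixed _ (hfix _), ← average_mul_of_fixed _ ha,
            average_average_subgroup]
  · calc a = average k H (∑ i, average k Γ (a * u i) * v i) := by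
          rw [← (huv a trivial).2, average_eq_self ha]
      _ = ∑ i, average k Γ (a * average k H (u i)) * average k H (v i) := by
          simp_rw [map_sum, average_fixed_mul _ (hfix _), ← average_fixed_mul _ ha,
            average_average_subgroup]

end QuasiBasis

lemma IsStarProjection.sum {R ι : Type*} [NonUnitalNonAssocSemiring R] [StarRing R]
    (s : Finset ι) {p : ι → R} (hp : ∀ i, IsStarProjection (p i))
    (horth : Pairwise fun i j => p i * p j = 0) : IsStarProjection (∑ i ∈ s, p i) := by
  classical
  induction s using Finset.induction_on with
  | empty => exact sum_empty (f := p) ▸ .zero R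
  | insert i s hi ih =>
    rw [sum_insert hi]
    refine (hp i).add ih ?_
    rw [mul_sum]
    exact sum_eq_zero fun j hj => horth (ne_of_mem_of_not_mem hj hi).symm

lemma eq_zero_of_mul_eq_mul_perm {R ι : Type*} [Ring R] [Fintype ι] {e : ι → R}
    (he_idem : ∀ i, e i * e i = e i) (he_orth : ∀ i j, i ≠ j → e i * e j = 0)
    (he_sum : ∑ i, e i = 1) {σ : ι → ι} (hσ : ∀ i, σ i ≠ i) {y : R}
    (hcomm : ∀ i, Commute (e i) y) (hy : ∀ i, y * e i = e (σ i) * y) : y = 0 := by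
  have hzero (i : ι) : e i * y = 0 :=
    calc e i * y = e i * (e i * y) := by rw [← mul_assoc, he_idem]
      _ = e i * (e (σ i) * y) := by rw [(hcomm i).eq, hy]
      _ = 0 := by rw [← mul_assoc, he_orth _ _ (hσ i).symm, zero_mul]
  rw [← one_mul y, ← he_sum, sum_mul]
  exact sum_eq_zero fun i _ => hzero i

lemma norm_smul_eq_of_star_smul {Q G : Type*} [CStarAlgebra Q] [Group G]
    [MulSemiringAction G Q] [SMulCommClass G ℂ Q]
    (hstar : ∀ (g : G) (x : Q), g • star x = star (g • x)) (g : G) (x : Q) :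
    ‖g • x‖ = ‖x‖ :=
  StarAlgEquiv.norm_map (StarAlgEquiv.ofAlgEquiv (MulSemiringAction.toAlgEquiv ℂ Q g) (hstar g)) x

section Rohlin

variable {Q : Type*} [NormedRing Q] [StarRing Q] [NormedAlgebra ℂ Q]
  {Qinf : Type*} [Ring Qinf] [StarRing Qinf] [Algebra ℂ Qinf] (S : SeqAlg Q Qinf)

lemma SeqAlg.q_average {Γ : Type*} [Group Γ] [Fintype Γ] [DistribMulAction Γ Q]
    [SMulCommClass Γ ℂ Q] (hbdd : ∀ (g : Γ) (a : ℕ → Q), IsBddSeq a → IsBddSeq fun n => g • a n)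
    {α : Γ → Qinf → Qinf}
    (hα : ∀ (g : Γ) (a : ℕ → Q), IsBddSeq a → α g (S.q a) = S.q fun n => g • a n)
    {a : ℕ → Q} (ha : IsBddSeq a) :
    S.q (fun n => average ℂ Γ (a n)) = (Fintype.card Γ : ℂ)⁻¹ • ∑ g, α g (S.q a) := by
  simp_rw [average_apply]
  rw [← Pi.smul_def, S.q_smul _ _ (IsBddSeq.sum univ fun g _ => hbdd g a ha),
    S.q_sum univ fun g _ => hbdd g a ha]
  simp_rw [hα _ _ ha]

variable {G : Type*} [Group G] [DistribMulAction G Q] {αinf : G → Qinf → Qinf} {e : G → Qinf}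

lemma rohlin_shift_sum (hbdd : ∀ (g : G) (a : ℕ → Q), IsBddSeq a → IsBddSeq fun n => g • a n)
    (hαinf : ∀ (g : G) (a : ℕ → Q), IsBddSeq a → αinf g (S.q a) = S.q fun n => g • a n)
    (he_shift : ∀ g h : G, αinf g (e h) = e (g * h)) (g : G) {ι : Type*} [Fintype ι]
    (j : ι → G) : αinf g (∑ i, e (j i)) = ∑ i, e (g * j i) := by
  rw [S.map_sum_of_q (f := DistribSMul.toAddMonoidHom Q g) (hbdd g) (hαinf g)]
  simp_rw [he_shift]

lemma rohlin_shift_sum_subgroup_of_mem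
    (hbdd : ∀ (g : G) (a : ℕ → Q), IsBddSeq a → IsBddSeq fun n => g • a n)
    (hαinf : ∀ (g : G) (a : ℕ → Q), IsBddSeq a → αinf g (S.q a) = S.q fun n => g • a n)
    (he_shift : ∀ g h : G, αinf g (e h) = e (g * h)) (H : Subgroup G) [Fintype H] {h : G}
    (hh : h ∈ H) : αinf h (∑ k : H, e k) = ∑ k : H, e k := by
  rw [rohlin_shift_sum S hbdd hαinf he_shift]
  exact Equiv.sum_comp (Equiv.mulLeft (⟨h, hh⟩ : H)) (fun k : H => e k)

lemma sum_rohlin_shift_sum_subgroup [Fintype G]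
    (hbdd : ∀ (g : G) (a : ℕ → Q), IsBddSeq a → IsBddSeq fun n => g • a n)
    (hαinf : ∀ (g : G) (a : ℕ → Q), IsBddSeq a → αinf g (S.q a) = S.q fun n => g • a n)
    (he_sum : ∑ g : G, e g = 1) (he_shift : ∀ g h : G, αinf g (e h) = e (g * h))
    (H : Subgroup G) [Fintype H] :
    ∑ g : G, αinf g (∑ k : H, e k) = (Fintype.card H : ℂ) • 1 := by
  simp_rw [rohlin_shift_sum S hbdd hαinf he_shift]
  rw [sum_comm]
  have hrow (k : H) : ∑ g : G, e (g * k) = 1 := Equiv.sum_comp (Equiv.mulRight (k : G)) e ▸ he_sum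
  simp_rw [hrow, sum_const, card_univ, Nat.cast_smul_eq_nsmul]

lemma eq_zero_of_mul_eq_smul_mul_of_rohlin [Fintype G]
    (hbdd : ∀ (g : G) (a : ℕ → Q), IsBddSeq a → IsBddSeq fun n => g • a n)
    (hαinf : ∀ (g : G) (a : ℕ → Q), IsBddSeq a → αinf g (S.q a) = S.q fun n => g • a n)
    (he_idem : ∀ g, e g * e g = e g) (he_orth : ∀ g h : G, g ≠ h → e g * e h = 0)
    (he_sum : ∑ g : G, e g = 1) (he_comm : ∀ (g : G) (x : Q), Commute (e g) (S.incl x))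
    (he_shift : ∀ g h : G, αinf g (e h) = e (g * h)) {t : G} (ht : t ≠ 1) {d : Q}
    (hd : ∀ x, d * x = (t • x) * d) : d = 0 :=
  S.eq_zero_of_incl_eq_zero <| eq_zero_of_mul_eq_mul_perm he_idem he_orth he_sum
    (σ := (t * ·)) (fun g h => ht (mul_eq_right.1 h)) (fun g => he_comm g d)
    (fun g => by rw [S.incl_mul_eq_of_intertwines (hbdd t) (hαinf t) hd, he_shift])

end Rohlin

theorem subgroup_fixed_point_inclusion_rohlin_general
    {Q : Type*} [NormedRing Q] [StarRing Q] [CStarRing Q] [NormedAlgebra ℂ Q]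
    [CompleteSpace Q] [StarModule ℂ Q]
    {G : Type*} [Group G] [Fintype G] [MulSemiringAction G Q]
    (hstar : ∀ (g : G) (x : Q), g • (star x) = star (g • x))
    (hsmul : ∀ (g : G) (c : ℂ) (x : Q), g • (c • x) = c • (g • x))
    (H : Subgroup G) [Fintype H]
    {Qinf : Type*} [Ring Qinf] [StarRing Qinf] [Algebra ℂ Qinf] (S : SeqAlg Q Qinf)
    (αinf : G → Qinf → Qinf)
    (hαinf : ∀ (g : G) (a : ℕ → Q), IsBddSeq a →
      αinf g (S.q a) = S.q fun n => g • a n)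
    -- Rohlin projections for the action of `G`
    (e : G → Qinf)
    (he_idem : ∀ g, e g * e g = e g) (he_star : ∀ g, star (e g) = e g)
    (he_orth : ∀ g h : G, g ≠ h → e g * e h = 0)
    (he_sum : ∑ g : G, e g = 1)
    (he_comm : ∀ (g : G) (x : Q), Commute (e g) (S.incl x))
    (he_shift : ∀ g h : G, αinf g (e h) = e (g * h))
    -- the fixed point algebras `A = Q^H ⊇ P = Q^G`
    (A : Set Q) (hA : A = {x : Q | ∀ h ∈ H, h • x = x})
    -- the canonical conditional expectation `E : Q → Q^G` and its coordinatewise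
    -- extension `E^∞`; `F` is its restriction to `A`, a conditional expectation onto `P`
    (E : Q → Q) (hE : ∀ x : Q, E x = ((Fintype.card G : ℂ))⁻¹ • ∑ g : G, g • x)
    (Einf : Qinf → Qinf)
    (hEinf : ∀ a : ℕ → Q, IsBddSeq a → Einf (S.q a) = S.q fun n => E (a n))
    -- `Index E = |G|` and `Index E_H = |H|`: quasi-bases for `E` and for
    -- `E_H(x) = (1/|H|) ∑_{h∈H} α_h x`
    (EH : Q → Q) (hEH : ∀ x : Q, EH x = ((Fintype.card H : ℂ))⁻¹ • ∑ h : H, (h : G) • x)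
    (hqE : ∃ (m : ℕ) (u v : Fin m → Q),
      (∀ a : Q, (a = ∑ i, u i * E (v i * a)) ∧ (a = ∑ i, E (a * u i) * v i)) ∧
      ∑ i, u i * v i = (Fintype.card G : ℂ) • (1 : Q)) :
    letI eH : Qinf := ∑ h : H, e (h : G)
    -- `e_H` is a projection in `A_∞ = A^∞ ∩ A'`
    (eH * eH = eH ∧ star eH = eH) ∧
    (∃ a : ℕ → Q, IsBddSeq a ∧ (∀ n, a n ∈ A) ∧ S.q a = eH) ∧
    (∀ x ∈ A, Commute eH (S.incl x)) ∧
    -- `F^∞(e_H) = (|H|/|G|)·1`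
    Einf eH = (((Fintype.card H : ℂ) / (Fintype.card G : ℂ))) • 1 ∧
    -- `Index F = |G|/|H|`: `F = E|_A` has a quasi-basis in `A` with index sum
    -- `(|G|/|H|)·1`, so the inclusion `P ⊆ A` has the Rohlin property
    (∃ (m : ℕ) (u v : Fin m → Q), (∀ i, u i ∈ A) ∧ (∀ i, v i ∈ A) ∧
      (∀ a ∈ A, (a = ∑ i, u i * E (v i * a)) ∧ (a = ∑ i, E (a * u i) * v i)) ∧
      ∑ i, u i * v i = ((Fintype.card G : ℂ) / (Fintype.card H : ℂ)) • (1 : Q)) := by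
  have : SMulCommClass G ℂ Q := ⟨hsmul⟩
  have hbdd (g : G) (a : ℕ → Q) (ha : IsBddSeq a) : IsBddSeq fun n => g • a n := by
    let : CStarAlgebra Q := {}
    exact ha.comp_of_norm_le fun x => (norm_smul_eq_of_star_smul hstar g x).le
  obtain rfl : E = average ℂ G := funext fun x => (hE x).trans (average_apply x).symm
  obtain rfl : EH = average ℂ H := funext fun x => (hEH x).trans (average_apply x).symm
  obtain rfl : A = MulAction.fixedPoints H Q := by ext; simp [hA]
  obtain ⟨m, u, v, huv, hindex⟩ := hqE
  have hbasis : IsQuasiBasis (average ℂ G) Set.univ u v := fun a _ => huv a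
  have htwisted (g : G) (hg : g ≠ 1) : ∑ i, u i * g • v i = 0 :=
    eq_zero_of_mul_eq_smul_mul_of_rohlin S hbdd hαinf he_idem he_orth he_sum he_comm he_shift
      (inv_ne_one.2 hg) (hbasis.twisted_sum_mul smul_average g)
  obtain ⟨b, hb, hqb⟩ := S.surj (∑ h : H, e h)
  refine ⟨?_, ⟨fun n => average ℂ H (b n), hb.average fun (h : H) => hbdd h,
    fun n h => smul_average h _, ?_⟩, fun x _ => Commute.sum_left _ _ _ fun h _ => he_comm h x,
    ?_, m, _, _, fun i h => smul_average h _, fun i h => smul_average h _,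
    hbasis.average_subgroup H, ?_⟩
  · have hproj := IsStarProjection.sum univ (p := fun h : H => e h)
      (fun h => ⟨he_idem h, he_star h⟩) fun h k hne => he_orth _ _ (Subtype.coe_injective.ne hne)
    exact ⟨hproj.isIdempotentElem, hproj.isSelfAdjoint⟩
  · rw [S.q_average (fun (h : H) => hbdd h) (α := fun h : H => αinf h) (fun h => hαinf h) hb, hqb]
    simp_rw [rohlin_shift_sum_subgroup_of_mem S hbdd hαinf he_shift H (Subtype.prop _)]
    rw [sum_const, card_univ, ← Nat.cast_smul_eq_nsmul ℂ, smul_smul, inv_mul_cancel₀ (by simp),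
      one_smul]
  · rw [← hqb, hEinf b hb, S.q_average hbdd hαinf hb, hqb,
      sum_rohlin_shift_sum_subgroup S hbdd hαinf he_sum he_shift H, smul_smul, inv_mul_eq_div]
  · rw [sum_average_mul_average (Γ := H) u v fun h hh => htwisted h (by exact_mod_cast hh), hindex,
      smul_smul, average_eq_self fun h => by rw [smul_comm, smul_one], inv_mul_eq_div]

/-- let `G` be a finite group acting on a unital C*-algebra `Q` with
Rohlin projections `{e_g} ⊆ Q_∞` and let `H ≤ G`. Put `e_H = ∑_{h∈H} e_h`, let
`A = Q^H ⊇ P = Q^G` be the fixed point algebras and `F = E|_A : A → P` the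
restriction of the canonical expectation `E(x) = (1/|G|) ∑_g α_g x`. Then
`e_H` is a projection in `A_∞ = A^∞ ∩ A'`, `F^∞(e_H) = (|H|/|G|)·1`, and
`Index F = |G|/|H|` (i.e. `F` has a quasi-basis in `A` with index sum
`(|G|/|H|)·1`); hence the inclusion `P ⊆ A` has the Rohlin property (granted the
injectivity of `x ↦ x e_H` on `A`). -/
theorem subgroup_fixed_point_inclusion_rohlin
    {Q : Type*} [NormedRing Q] [StarRing Q] [CStarRing Q] [NormedAlgebra ℂ Q]
    [CompleteSpace Q] [StarModule ℂ Q]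
    {G : Type*} [Group G] [Fintype G] [MulSemiringAction G Q]
    (hstar : ∀ (g : G) (x : Q), g • (star x) = star (g • x))
    (hsmul : ∀ (g : G) (c : ℂ) (x : Q), g • (c • x) = c • (g • x))
    (H : Subgroup G) [Fintype H]
    {Qinf : Type*} [Ring Qinf] [StarRing Qinf] [Algebra ℂ Qinf] (S : SeqAlg Q Qinf)
    (αinf : G → Qinf → Qinf)
    (hαinf : ∀ (g : G) (a : ℕ → Q), IsBddSeq a →
      αinf g (S.q a) = S.q fun n => g • a n)
    -- Rohlin projections for the action of `G`
    (e : G → Qinf)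
    (he_idem : ∀ g, e g * e g = e g) (he_star : ∀ g, star (e g) = e g)
    (he_orth : ∀ g h : G, g ≠ h → e g * e h = 0)
    (he_sum : ∑ g : G, e g = 1)
    (he_comm : ∀ (g : G) (x : Q), Commute (e g) (S.incl x))
    (he_shift : ∀ g h : G, αinf g (e h) = e (g * h))
    -- the fixed point algebras `A = Q^H ⊇ P = Q^G`
    (A P : Set Q) (hA : A = {x : Q | ∀ h ∈ H, h • x = x})
    (hP : P = {x : Q | ∀ g : G, g • x = x})
    -- the canonical conditional expectation `E : Q → Q^G` and its coordinatewise
    -- extension `E^∞`; `F` is its restriction to `A`, a conditional expectation onto `P`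
    (E : Q → Q) (hE : ∀ x : Q, E x = ((Fintype.card G : ℂ))⁻¹ • ∑ g : G, g • x)
    (Einf : Qinf → Qinf)
    (hEinf : ∀ a : ℕ → Q, IsBddSeq a → Einf (S.q a) = S.q fun n => E (a n))
    -- `Index E = |G|` and `Index E_H = |H|`: quasi-bases for `E` and for
    -- `E_H(x) = (1/|H|) ∑_{h∈H} α_h x`
    (EH : Q → Q) (hEH : ∀ x : Q, EH x = ((Fintype.card H : ℂ))⁻¹ • ∑ h : H, (h : G) • x)
    (hqE : ∃ (m : ℕ) (u v : Fin m → Q),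
      (∀ a : Q, (a = ∑ i, u i * E (v i * a)) ∧ (a = ∑ i, E (a * u i) * v i)) ∧
      ∑ i, u i * v i = (Fintype.card G : ℂ) • (1 : Q))
    (hqEH : ∃ (m : ℕ) (u v : Fin m → Q),
      (∀ a : Q, (a = ∑ i, u i * EH (v i * a)) ∧ (a = ∑ i, EH (a * u i) * v i)) ∧
      ∑ i, u i * v i = (Fintype.card H : ℂ) • (1 : Q))
    -- injectivity of `x ↦ x e_H` on `A`
    (hinj : ∀ x ∈ A, S.incl x * (∑ h : H, e (h : G)) = 0 → x = 0) :
    letI eH : Qinf := ∑ h : H, e (h : G)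
    -- `e_H` is a projection in `A_∞ = A^∞ ∩ A'`
    (eH * eH = eH ∧ star eH = eH) ∧
    (∃ a : ℕ → Q, IsBddSeq a ∧ (∀ n, a n ∈ A) ∧ S.q a = eH) ∧
    (∀ x ∈ A, Commute eH (S.incl x)) ∧
    -- `F^∞(e_H) = (|H|/|G|)·1`
    Einf eH = (((Fintype.card H : ℂ) / (Fintype.card G : ℂ))) • 1 ∧
    -- `Index F = |G|/|H|`: `F = E|_A` has a quasi-basis in `A` with index sum
    -- `(|G|/|H|)·1`, so the inclusion `P ⊆ A` has the Rohlin property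
    (∃ (m : ℕ) (u v : Fin m → Q), (∀ i, u i ∈ A) ∧ (∀ i, v i ∈ A) ∧
      (∀ a ∈ A, (a = ∑ i, u i * E (v i * a)) ∧ (a = ∑ i, E (a * u i) * v i)) ∧
      ∑ i, u i * v i = ((Fintype.card G : ℂ) / (Fintype.card H : ℂ)) • (1 : Q)) :=
  subgroup_fixed_point_inclusion_rohlin_general hstar hsmul H S αinf hαinf e he_idem he_star he_orth
    he_sum he_comm he_shift A hA E hE Einf hEinf EH hEH hqE
end
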